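/- arXiv:1404.3458 — 6 statements merged into one kernel-verified Lean document; each statement's English description precedes it below -/
import Mathlib

section
/- For every 0 ≤ j ≤ r−1 and all x, y ∈ F, the subspace vanishing polynomial satisfies W_j(x + y) = W_j(x) + W_j(y) (i.e., evaluation of W_j is an additive map on F). -/
open Polynomial Finset

attribute [local instance] ZMod.algebra

/-- `ω_i = Σ_{j<r} i_j · v_j`, where `i_j` are the binary digits of `i`. -/
noncomputable def omegaF {F : Type*} [Field F] {r : ℕ} (v : Fin r → F) (i : ℕ) : F :=
  ∑ j : Fin r, if Nat.testBit i (j : ℕ) then v j else 0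

/-- The subspace vanishing polynomial `W_j(X) = ∏_{i=0}^{2^j-1} (X - ω_i)`. -/
noncomputable def Wpoly {F : Type*} [Field F] {r : ℕ} (v : Fin r → F) (j : ℕ) : Polynomial F :=
  ∏ i ∈ Finset.range (2 ^ j), (Polynomial.X - Polynomial.C (omegaF v i))

/-- The basis polynomial `X_i(X) = ∏_{j<r} (W_j(X)/W_j(ω_{2^j}))^{i_j}`. -/
noncomputable def Xpoly {F : Type*} [Field F] {r : ℕ} (v : Fin r → F) (i : ℕ) : Polynomial F :=
  ∏ j ∈ Finset.range r,
    if Nat.testBit i j then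
      Polynomial.C (((Wpoly v j).eval (omegaF v (2 ^ j)))⁻¹) * Wpoly v j
    else 1

/-- The recursively defined polynomials `Δ_i^m`:
`Δ_t^m = C (d m)` and `Δ_i^m = Δ_{i+1}^m + (W_i/W_i(ω_{2^i})) · Δ_{i+1}^{m+2^i}` for `i < t`. -/
noncomputable def Delta {F : Type*} [Field F] {r : ℕ} (v : Fin r → F) (d : ℕ → F)
    (t i m : ℕ) : Polynomial F :=
  if i < t then
    Delta v d t (i + 1) m +
      Polynomial.C (((Wpoly v i).eval (omegaF v (2 ^ i)))⁻¹) * Wpoly v i *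
        Delta v d t (i + 1) (m + 2 ^ i)
  else Polynomial.C (d m)
termination_by t - i
decreasing_by all_goals omega

/-- The constant `W'_l = (∏_{j=1}^{2^l-1} ω_j) / W_l(ω_{2^l})`. -/
noncomputable def Wd {F : Type*} [Field F] {r : ℕ} (v : Fin r → F) (l : ℕ) : F :=
  (∏ j ∈ Finset.Ico 1 (2 ^ l), omegaF v j) / (Wpoly v l).eval (omegaF v (2 ^ l))


lemma omega_add_pow {F : Type*} [Field F] {r : ℕ} (v : Fin r → F) {j : ℕ} (hj : j < r)
    {i : ℕ} (hi : i < 2 ^ j) :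
    omegaF v (i + 2 ^ j) = omegaF v i + v ⟨j, hj⟩ := by
  have hbit : ∀ k : ℕ, Nat.testBit (i + 2 ^ j) k =
      (Nat.testBit i k || decide (k = j)) := by
    intro k
    rcases lt_trichotomy k j with h | h | h
    · rw [Nat.add_comm, Nat.testBit_two_pow_add_gt h]
      simp [Nat.ne_of_lt h]
    · subst h
      rw [Nat.add_comm, Nat.testBit_two_pow_add_eq, Nat.testBit_lt_two_pow hi]
      simp
    · have : i + 2 ^ j < 2 ^ k := by
        calc i + 2 ^ j < 2 ^ j + 2 ^ j := by omega
        _ = 2 ^ (j + 1) := by ring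
        _ ≤ 2 ^ k := Nat.pow_le_pow_right (by norm_num) h
      rw [Nat.testBit_lt_two_pow this, Nat.testBit_lt_two_pow (by omega)]
      simp [Nat.ne_of_gt h]
  unfold omegaF
  have : ∀ k : Fin r, (if Nat.testBit (i + 2 ^ j) (k : ℕ) then v k else 0) =
      (if Nat.testBit i (k : ℕ) then v k else 0) + (if k = ⟨j, hj⟩ then v k else 0) := by
    intro k
    rw [hbit]
    by_cases h1 : Nat.testBit i (k : ℕ)
    · have : (k : ℕ) ≠ j := by
        intro he
        rw [he, Nat.testBit_lt_two_pow hi] at h1; exact absurd h1 (by simp)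
      have : k ≠ ⟨j, hj⟩ := fun hk => this (by rw [hk])
      simp_all
    · by_cases h2 : k = ⟨j, hj⟩ <;> simp_all [Fin.ext_iff]
  rw [Finset.sum_congr rfl (fun k _ => this k), Finset.sum_add_distrib,
    Finset.sum_ite_eq' Finset.univ (⟨j, hj⟩ : Fin r)]
  simp

lemma Wpoly_succ_eval {F : Type*} [Field F] [CharP F 2] {r : ℕ} (v : Fin r → F)
    {j : ℕ} (hj : j < r) (x : F) :
    (Wpoly v (j + 1)).eval x = (Wpoly v j).eval x * (Wpoly v j).eval (x + v ⟨j, hj⟩) := by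
  unfold Wpoly
  rw [pow_succ, mul_two, Finset.prod_range_add]
  simp only [eval_mul, eval_prod, eval_sub, eval_X, eval_C]
  congr 1
  apply Finset.prod_congr rfl
  intro i hi
  rw [Nat.add_comm, omega_add_pow v hj (Finset.mem_range.mp hi)]
  have := CharTwo.sub_eq_add (R := F)
  rw [this, this]
  ring

/-- For every `0 ≤ j ≤ r-1` and all `x, y ∈ F`,
`W_j(x + y) = W_j(x) + W_j(y)`. -/
theorem statement1 (r : ℕ) (hr : 1 ≤ r) (F : Type*) [Field F] [Fintype F] [CharP F 2]
    (hcard : Fintype.card F = 2 ^ r) (v : Fin r → F)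
    (hv : LinearIndependent (ZMod 2) v) :
    ∀ j ≤ r - 1, ∀ x y : F,
      (Wpoly v j).eval (x + y) = (Wpoly v j).eval x + (Wpoly v j).eval y := by
  have h2 : (2 : F) = 0 := by
    have := CharP.cast_eq_zero F 2; exact_mod_cast this
  have key : ∀ j : ℕ, j < r → ∀ x y : F,
      (Wpoly v j).eval (x + y) = (Wpoly v j).eval x + (Wpoly v j).eval y := by
    intro j
    induction j with
    | zero =>
      intro _ x y
      simp only [Wpoly, pow_zero, Finset.prod_range_one]
      have : omegaF v 0 = 0 := by simp [omegaF]
      simp [this]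
    | succ j ih =>
      intro hj1 x y
      have hj : j < r := by omega
      have IH := ih hj
      rw [Wpoly_succ_eval v hj, Wpoly_succ_eval v hj, Wpoly_succ_eval v hj]
      rw [show x + y + v ⟨j, hj⟩ = x + (y + v ⟨j, hj⟩) by ring, IH x y, IH x (y + v ⟨j, hj⟩),
        IH y (v ⟨j, hj⟩), IH x (v ⟨j, hj⟩)]
      set a := (Wpoly v j).eval x
      set b := (Wpoly v j).eval y
      set c := (Wpoly v j).eval (v ⟨j, hj⟩)
      linear_combination a * b * h2
  intro j hj x y
  exact key j (by omega) x y
end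

section
/- For every 0 ≤ i ≤ r−1, every x ∈ F, and every 0 ≤ b < 2^i, one has W_i(x + ω_b) = W_i(x); that is, W_i is invariant under shifting its argument by any element of the span of v_0, …, v_{i−1}. -/
open Polynomial Finset

attribute [local instance] ZMod.algebra

section CharTwo

variable {F : Type*} [Field F] [CharP F 2] {r : ℕ} (v : Fin r → F)

theorem omegaF_xor (a b : ℕ) : omegaF v (a ^^^ b) = omegaF v a + omegaF v b := by
  unfold omegaF
  rw [← sum_add_distrib]
  refine sum_congr rfl fun j _ => ?_
  rw [Nat.testBit_xor]
  cases Nat.testBit a j <;> cases Nat.testBit b j <;> simp [CharTwo.add_self_eq_zero]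

/-- Translation by `ω_b` permutes the roots `ω_c`, `c < 2^i`, of `W_i`, via `c ↦ c xor b`. -/
theorem Wpoly_eval_add_omegaF {i b : ℕ} (hb : b < 2 ^ i) (x : F) :
    (Wpoly v i).eval (x + omegaF v b) = (Wpoly v i).eval x := by
  simp only [Wpoly, eval_prod, eval_sub, eval_X, eval_C]
  have maps_to : ∀ c ∈ range (2 ^ i), c ^^^ b ∈ range (2 ^ i) := fun c hc =>
    mem_range.2 (Nat.xor_lt_two_pow (mem_range.1 hc) hb)
  refine prod_nbij' (· ^^^ b) (· ^^^ b) maps_to maps_to (fun c _ => by simp)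
    (fun c _ => by simp) fun c _ => ?_
  rw [omegaF_xor, CharTwo.sub_eq_add, CharTwo.sub_eq_add]
  ring

end CharTwo

theorem statement4_general (r : ℕ) (F : Type*) [Field F] [CharP F 2] (v : Fin r → F) :
    ∀ i ≤ r - 1, ∀ x : F, ∀ b < 2 ^ i,
      (Wpoly v i).eval (x + omegaF v b) = (Wpoly v i).eval x :=
  fun _ _ x _ hb => Wpoly_eval_add_omegaF v hb x

/-- For every `0 ≤ i ≤ r-1`, every `x ∈ F` and every `0 ≤ b < 2^i`,
`W_i(x + ω_b) = W_i(x)`. -/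
theorem statement4 (r : ℕ) (hr : 1 ≤ r) (F : Type*) [Field F] [Fintype F] [CharP F 2]
    (hcard : Fintype.card F = 2 ^ r) (v : Fin r → F)
    (hv : LinearIndependent (ZMod 2) v) :
    ∀ i ≤ r - 1, ∀ x : F, ∀ b < 2 ^ i,
      (Wpoly v i).eval (x + omegaF v b) = (Wpoly v i).eval x :=
  statement4_general r F v
end

section
/- For every 0 ≤ i ≤ t, every 0 ≤ m < 2^i, every x ∈ F, and every 0 ≤ b < 2^i, one has Δ_i^m(x + ω_b) = Δ_i^m(x). -/
open Polynomial Finset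

attribute [local instance] ZMod.algebra

lemma omegaF_add {F : Type*} [Field F] [CharP F 2] {r : ℕ} (v : Fin r → F) (a b : ℕ) :
    omegaF v a + omegaF v b = omegaF v (a ^^^ b) := by
  unfold omegaF
  rw [← Finset.sum_add_distrib]
  refine Finset.sum_congr rfl fun j _ => ?_
  rw [Nat.testBit_xor]
  cases h1 : a.testBit (j : ℕ) <;> cases h2 : b.testBit (j : ℕ) <;>
    simp [CharTwo.add_self_eq_zero]

lemma Wpoly_eval_add {F : Type*} [Field F] [CharP F 2] {r : ℕ} (v : Fin r → F) (l b : ℕ)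
    (hb : b < 2 ^ l) (x : F) :
    (Wpoly v l).eval (x + omegaF v b) = (Wpoly v l).eval x := by
  unfold Wpoly
  simp only [eval_prod, eval_sub, eval_X, eval_C]
  have key : ∀ i ∈ Finset.range (2 ^ l),
      x + omegaF v b - omegaF v i = x - omegaF v (b ^^^ i) := by
    intro i _
    rw [← omegaF_add, CharTwo.sub_eq_add, CharTwo.sub_eq_add]
    ring
  rw [Finset.prod_congr rfl key]
  refine Finset.prod_nbij' (fun i => b ^^^ i) (fun i => b ^^^ i) ?_ ?_ ?_ ?_ ?_ <;>
    intro i hi <;> simp only [Finset.mem_range] at *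
  · exact Nat.xor_lt_two_pow hb hi
  · exact Nat.xor_lt_two_pow hb hi
  · simp [← Nat.xor_assoc]
  · simp [← Nat.xor_assoc]

lemma statement7_aux {F : Type*} [Field F] [CharP F 2] {r : ℕ} (v : Fin r → F) (d : ℕ → F)
    (t : ℕ) : ∀ k i, t - i ≤ k → i ≤ t → ∀ m, ∀ x : F, ∀ b < 2 ^ i,
      (Delta v d t i m).eval (x + omegaF v b) = (Delta v d t i m).eval x := by
  intro k
  induction k with
  | zero =>
    intro i hk hit m x b hb
    rw [Delta, if_neg (by omega)]
    simp
  | succ k ih =>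
    intro i hk hit m x b hb
    by_cases h : i < t
    · have hb' : b < 2 ^ (i + 1) := lt_trans hb (Nat.pow_lt_pow_succ (by norm_num))
      rw [Delta, if_pos h]
      simp only [eval_add, eval_mul, eval_C]
      rw [ih (i + 1) (by omega) (by omega) m x b hb',
        ih (i + 1) (by omega) (by omega) (m + 2 ^ i) x b hb',
        Wpoly_eval_add v i b hb x]
    · rw [Delta, if_neg h]
      simp

/-- For every `0 ≤ i ≤ t`, `0 ≤ m < 2^i`, `x ∈ F` and `0 ≤ b < 2^i`,
`Δ_i^m(x + ω_b) = Δ_i^m(x)`. -/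
theorem statement7 (r : ℕ) (hr : 1 ≤ r) (F : Type*) [Field F] [Fintype F] [CharP F 2]
    (hcard : Fintype.card F = 2 ^ r) (v : Fin r → F)
    (hv : LinearIndependent (ZMod 2) v) (t : ℕ) (ht1 : 1 ≤ t) (htr : t ≤ r) (d : ℕ → F) :
    ∀ i ≤ t, ∀ m < 2 ^ i, ∀ x : F, ∀ b < 2 ^ i,
      (Delta v d t i m).eval (x + omegaF v b) = (Delta v d t i m).eval x := by
  intro i hi m _ x b hb
  exact statement7_aux v d t t i (by omega) hi m x b hb
end

section
/- The recursion computes the polynomial in the new basis: Δ_0^0 = Σ_{i=0}^{h−1} d_i·X_i as an identity of polynomials in F[X]. -/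
open Polynomial Finset

attribute [local instance] ZMod.algebra

lemma sum_range_two_mul' {M : Type*} [AddCommMonoid M] (n : ℕ) (f : ℕ → M) :
    ∑ k ∈ Finset.range (2 * n), f k
      = ∑ k ∈ Finset.range n, (f (2 * k) + f (2 * k + 1)) := by
  induction n with
  | zero => simp
  | succ n ih =>
      rw [show 2 * (n + 1) = 2 * n + 1 + 1 by ring, Finset.sum_range_succ,
        Finset.sum_range_succ, ih, Finset.sum_range_succ, add_assoc]

lemma delta_eq {F : Type*} [Field F] {r : ℕ} (v : Fin r → F) (d : ℕ → F) (t : ℕ) (n : ℕ) :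
    ∀ i m, i + n = t → Delta v d t i m =
      ∑ k ∈ Finset.range (2 ^ n), Polynomial.C (d (m + k * 2 ^ i)) *
        ∏ j ∈ Finset.range n,
          if Nat.testBit k j then
            Polynomial.C (((Wpoly v (i + j)).eval (omegaF v (2 ^ (i + j))))⁻¹) * Wpoly v (i + j)
          else 1 := by
  induction n with
  | zero =>
      intro i m h
      rw [Delta]
      simp [show ¬ i < t by omega]
  | succ n ih =>
      intro i m h
      rw [Delta, if_pos (by omega), ih (i + 1) m (by omega), ih (i + 1) (m + 2 ^ i) (by omega)]
      rw [show (2 : ℕ) ^ (n + 1) = 2 * 2 ^ n by ring, sum_range_two_mul']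
      rw [Finset.mul_sum, ← Finset.sum_add_distrib]
      refine Finset.sum_congr rfl fun k _ => ?_
      rw [Finset.prod_range_succ' (fun j => if Nat.testBit (2 * k) j then
            Polynomial.C (((Wpoly v (i + j)).eval (omegaF v (2 ^ (i + j))))⁻¹) * Wpoly v (i + j)
          else 1) n,
        Finset.prod_range_succ' (fun j => if Nat.testBit (2 * k + 1) j then
            Polynomial.C (((Wpoly v (i + j)).eval (omegaF v (2 ^ (i + j))))⁻¹) * Wpoly v (i + j)
          else 1) n]
      have hb0 : Nat.testBit (2 * k) 0 = false := by
        simp [Nat.testBit_zero, Nat.mul_mod_right]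
      have hb1 : Nat.testBit (2 * k + 1) 0 = true := by
        simp [Nat.testBit_zero]
      have hbs0 : ∀ j, Nat.testBit (2 * k) (j + 1) = Nat.testBit k j := by
        intro j
        rw [Nat.testBit_succ]
        congr 1
        omega
      have hbs1 : ∀ j, Nat.testBit (2 * k + 1) (j + 1) = Nat.testBit k j := by
        intro j
        rw [Nat.testBit_succ]
        congr 1
        omega
      simp only [hb0, hb1, hbs0, hbs1, Bool.false_eq_true, if_true, if_false, mul_one, Nat.add_zero]
      rw [show m + 2 * k * 2 ^ i = m + k * 2 ^ (i + 1) from by ring,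
        show m + (2 * k + 1) * 2 ^ i = m + 2 ^ i + k * 2 ^ (i + 1) from by ring]
      have hP : (∏ j ∈ Finset.range n, if Nat.testBit k j then
            Polynomial.C (((Wpoly v (i + (j + 1))).eval (omegaF v (2 ^ (i + (j + 1)))))⁻¹) *
              Wpoly v (i + (j + 1)) else 1)
          = ∏ j ∈ Finset.range n, if Nat.testBit k j then
            Polynomial.C (((Wpoly v (i + 1 + j)).eval (omegaF v (2 ^ (i + 1 + j))))⁻¹) *
              Wpoly v (i + 1 + j) else 1 := by
        refine Finset.prod_congr rfl fun j _ => ?_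
        rw [show i + (j + 1) = i + 1 + j from by omega]
      rw [hP]
      ring

/-- The recursion computes the polynomial in the new basis:
`Δ_0^0 = Σ_{i=0}^{h-1} d_i · X_i` in `F[X]`, where `h = 2^t`. -/
theorem statement8 (r : ℕ) (hr : 1 ≤ r) (F : Type*) [Field F] [Fintype F] [CharP F 2]
    (hcard : Fintype.card F = 2 ^ r) (v : Fin r → F)
    (hv : LinearIndependent (ZMod 2) v) (t : ℕ) (ht1 : 1 ≤ t) (htr : t ≤ r) (d : ℕ → F) :
    Delta v d t 0 0 = ∑ i ∈ Finset.range (2 ^ t), Polynomial.C (d i) * Xpoly v i := by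
  rw [delta_eq v d t t 0 0 (by omega)]
  refine Finset.sum_congr rfl fun k hk => ?_
  rw [Finset.mem_range] at hk
  simp only [zero_add, pow_zero, mul_one]
  congr 1
  unfold Xpoly
  rw [← Finset.prod_subset (Finset.range_subset_range.mpr htr)]
  intro j hj hjt
  rw [Finset.mem_range] at hj
  rw [Finset.mem_range, not_lt] at hjt
  rw [if_neg]
  simp only [Nat.testBit_eq_false_of_lt (lt_of_lt_of_le hk (Nat.pow_le_pow_right (by norm_num) hjt))]
  exact Bool.false_ne_true
end

section
/- Let h = 2^t with 1 ≤ t ≤ r and let d_0, …, d_{h−1} ∈ F. Then the formal derivative of Σ_{i=0}^{h−1} d_i·X_i equals Σ_{j=0}^{h−1} (Σ_{l ∈ I_j^c} W'_l · d_{j+2^l}) · X_j, where I_j^c = {l : 0 ≤ l ≤ t−1 and bit l of j equals 0} and W'_l = (∏_{j=1}^{2^l−1} ω_j) / W_l(ω_{2^l}) ∈ F. -/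
open Polynomial Finset

attribute [local instance] ZMod.algebra

set_option linter.unusedSectionVars false
set_option linter.unusedVariables false

lemma div_pow_mod_two_of_bit_false {m j : ℕ} (h : Nat.testBit m j = false) :
    m / 2 ^ j % 2 = 0 := by
  rw [Nat.testBit_eq_decide_div_mod_eq] at h
  simp only [decide_eq_false_iff_not] at h
  omega

lemma mod_lt_pow_of_bit_false {m j : ℕ} (h : Nat.testBit m j = false) :
    m % 2 ^ (j + 1) < 2 ^ j := by
  have h0 := div_pow_mod_two_of_bit_false h
  have h1 : m % (2 ^ j * 2) = m % 2 ^ j + 2 ^ j * (m / 2 ^ j % 2) := Nat.mod_mul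
  have h2 : m % 2 ^ j < 2 ^ j := Nat.mod_lt _ (Nat.two_pow_pos j)
  rw [h0, Nat.mul_zero, Nat.add_zero] at h1
  rw [pow_succ]
  omega

lemma div_pow_succ_add {m j : ℕ} (h : Nat.testBit m j = false) :
    (m + 2 ^ j) / 2 ^ (j + 1) = m / 2 ^ (j + 1) := by
  have hlt := mod_lt_pow_of_bit_false h
  have h1 : m + 2 ^ j = (m % 2 ^ (j + 1) + 2 ^ j) + 2 ^ (j + 1) * (m / 2 ^ (j + 1)) := by
    have := Nat.div_add_mod m (2 ^ (j + 1)); omega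
  rw [h1, Nat.add_mul_div_left _ _ (Nat.two_pow_pos _),
    Nat.div_eq_of_lt (by rw [pow_succ] at hlt ⊢; omega), Nat.zero_add]

lemma testBit_add_pow_gt {m j k : ℕ} (h : Nat.testBit m j = false) (hk : j < k) :
    Nat.testBit (m + 2 ^ j) k = Nat.testBit m k := by
  have hd : (m + 2 ^ j) / 2 ^ k = m / 2 ^ k := by
    have h2 : 2 ^ k = 2 ^ (j + 1) * 2 ^ (k - j - 1) := by rw [← pow_add]; congr 1; omega
    rw [h2, ← Nat.div_div_eq_div_mul, ← Nat.div_div_eq_div_mul, div_pow_succ_add h]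
  rw [Nat.testBit_eq_decide_div_mod_eq, Nat.testBit_eq_decide_div_mod_eq, hd]

lemma testBit_add_pow_ne {m j k : ℕ} (h : Nat.testBit m j = false) (hk : k ≠ j) :
    Nat.testBit (m + 2 ^ j) k = Nat.testBit m k := by
  rcases Nat.lt_or_ge k j with h' | h'
  · rw [Nat.add_comm]; exact Nat.testBit_two_pow_add_gt h' m
  · exact testBit_add_pow_gt h (by omega)

lemma testBit_add_pow_eq {m j : ℕ} (h : Nat.testBit m j = false) :
    Nat.testBit (m + 2 ^ j) j = true := by
  rw [Nat.add_comm, Nat.testBit_two_pow_add_eq, h]; rfl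

lemma add_pow_eq_xor {m j : ℕ} (h : Nat.testBit m j = false) : m + 2 ^ j = m ^^^ 2 ^ j := by
  apply Nat.eq_of_testBit_eq
  intro k
  rcases eq_or_ne k j with rfl | hk
  · rw [testBit_add_pow_eq h, Nat.testBit_xor, h, Nat.testBit_two_pow]; simp
  · rw [testBit_add_pow_ne h hk, Nat.testBit_xor, Nat.testBit_two_pow]
    simp [(Ne.symm hk)]

lemma add_pow_lt {m j t : ℕ} (h : Nat.testBit m j = false) (hm : m < 2 ^ t) (hj : j < t) :
    m + 2 ^ j < 2 ^ t := by
  rw [add_pow_eq_xor h]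
  exact Nat.xor_lt_two_pow hm (Nat.pow_lt_pow_right one_lt_two hj)

lemma testBit_sub_pow_self {i j : ℕ} (h : Nat.testBit i j = true) :
    Nat.testBit (i - 2 ^ j) j = false := by
  have hge : 2 ^ j ≤ i := Nat.ge_two_pow_of_testBit h
  have h1 : i / 2 ^ j % 2 = 1 := by
    rw [Nat.testBit_eq_decide_div_mod_eq] at h; simpa using h
  have hpos : 0 < i / 2 ^ j := Nat.div_pos hge (Nat.two_pow_pos j)
  obtain ⟨q, hq⟩ : ∃ q, i / 2 ^ j = q + 1 := ⟨i / 2 ^ j - 1, by omega⟩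
  have h2 : i = 2 ^ j * q + 2 ^ j + i % 2 ^ j := by
    have := Nat.div_add_mod i (2 ^ j)
    rw [hq] at this
    rw [Nat.mul_add, Nat.mul_one] at this
    omega
  have h3 : (i - 2 ^ j) = 2 ^ j * q + i % 2 ^ j := by omega
  have h4 : (i - 2 ^ j) / 2 ^ j = q := by
    rw [h3, Nat.mul_add_div (Nat.two_pow_pos j),
      Nat.div_eq_of_lt (Nat.mod_lt _ (Nat.two_pow_pos j)), Nat.add_zero]
  rw [Nat.testBit_eq_decide_div_mod_eq, h4]
  simp only [decide_eq_false_iff_not]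
  omega

lemma sub_pow_add {i j : ℕ} (h : Nat.testBit i j = true) : i - 2 ^ j + 2 ^ j = i := by
  have := Nat.ge_two_pow_of_testBit h; omega

lemma derivative_finset_prod {F : Type*} [Field F] {ι : Type*} [DecidableEq ι]
    (s : Finset ι) (f : ι → Polynomial F) :
    Polynomial.derivative (∏ i ∈ s, f i)
      = ∑ i ∈ s, (∏ j ∈ s.erase i, f j) * Polynomial.derivative (f i) := by
  classical
  induction s using Finset.induction_on with
  | empty => simp
  | @insert a s ha ih =>
    have hsum : ∀ i ∈ s, (∏ j ∈ (insert a s).erase i, f j) * Polynomial.derivative (f i)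
        = f a * ((∏ j ∈ s.erase i, f j) * Polynomial.derivative (f i)) := fun i hi => by
      rw [Finset.erase_insert_of_ne (by rintro rfl; exact ha hi),
        Finset.prod_insert (fun h => ha (Finset.mem_of_mem_erase h))]
      ring
    rw [Finset.prod_insert ha, Polynomial.derivative_mul, ih, Finset.sum_insert ha,
      Finset.erase_insert ha, Finset.mul_sum, Finset.sum_congr rfl hsum]
    ring
section OmegaW
variable {F : Type*} [Field F] [CharP F 2] {r : ℕ} (v : Fin r → F)

lemma omegaF_zero : omegaF v 0 = 0 := by simp [omegaF]

lemma omegaF_add_pow {j : ℕ} (hj : j < r) {i : ℕ} (hi : i < 2 ^ j) :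
    omegaF v (i + 2 ^ j) = omegaF v i + v ⟨j, hj⟩ := by
  have hb : Nat.testBit i j = false := Nat.testBit_lt_two_pow hi
  have key : ∀ k : Fin r, (if Nat.testBit (i + 2 ^ j) (k : ℕ) then v k else 0)
      = (if Nat.testBit i (k : ℕ) then v k else 0) + (if (k : ℕ) = j then v k else 0) := by
    intro k
    rcases eq_or_ne (k : ℕ) j with hk | hk
    · rw [hk, testBit_add_pow_eq hb, hb]
      simp
    · rw [testBit_add_pow_ne hb hk]
      simp [hk]
  unfold omegaF
  rw [Finset.sum_congr rfl (fun k _ => key k), Finset.sum_add_distrib]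
  congr 1
  rw [Finset.sum_eq_single (⟨j, hj⟩ : Fin r)]
  · simp
  · intro b _ hb
    have : (b : ℕ) ≠ j := fun h => hb (Fin.ext h)
    simp [this]
  · simp

lemma omegaF_pow {j : ℕ} (hj : j < r) : omegaF v (2 ^ j) = v ⟨j, hj⟩ := by
  have := omegaF_add_pow v hj (i := 0) (Nat.two_pow_pos j)
  simpa [omegaF_zero] using this

lemma Wpoly_eq (j : ℕ) :
    Wpoly v j = ∏ i ∈ Finset.range (2 ^ j), (Polynomial.X + Polynomial.C (omegaF v i)) := by
  unfold Wpoly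
  refine Finset.prod_congr rfl fun i _ => ?_
  rw [sub_eq_add_neg, ← Polynomial.C_neg, CharTwo.neg_eq]

lemma Wpoly_zero : Wpoly v 0 = Polynomial.X := by
  simp [Wpoly_eq, omegaF_zero]

end OmegaW
section W2
open Polynomial Finset
variable {F : Type*} [Field F] [CharP F 2] {r : ℕ} (v : Fin r → F)

lemma Wpoly_succ_aux {j : ℕ} (hj : j < r)
    (hcomp : ∀ a : F, (Wpoly v j).comp (X + C a) = Wpoly v j + C ((Wpoly v j).eval a)) :
    Wpoly v (j + 1) = Wpoly v j * (Wpoly v j + C ((Wpoly v j).eval (omegaF v (2 ^ j)))) := by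
  have h2 : 2 ^ (j + 1) = 2 ^ j + 2 ^ j := by rw [pow_succ]; omega
  have h1 : Wpoly v (j + 1)
      = Wpoly v j * ∏ i ∈ Finset.range (2 ^ j), (X + C (omegaF v (2 ^ j + i))) := by
    rw [Wpoly_eq, h2, Finset.prod_range_add, ← Wpoly_eq]
  rw [h1]
  congr 1
  have h3 : ∀ i ∈ Finset.range (2 ^ j), (X + C (omegaF v (2 ^ j + i)) : Polynomial F)
      = (X + C (omegaF v i)).comp (X + C (omegaF v (2 ^ j))) := by
    intro i hi
    rw [Finset.mem_range] at hi
    rw [Nat.add_comm (2 ^ j) i, omegaF_add_pow v hj hi, omegaF_pow v hj]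
    simp only [Polynomial.add_comp, Polynomial.X_comp, Polynomial.C_comp, map_add,
      omegaF_pow v hj]
    ring
  rw [Finset.prod_congr rfl h3, ← Polynomial.prod_comp, ← Wpoly_eq, hcomp]

lemma Wpoly_comp : ∀ j, j ≤ r → ∀ a : F,
    (Wpoly v j).comp (X + C a) = Wpoly v j + C ((Wpoly v j).eval a)
  | 0, _, a => by simp [Wpoly_zero]
  | (j+1), hj, a => by
    have IH := Wpoly_comp j (by omega)
    have hs := Wpoly_succ_aux v (by omega : j < r) IH
    rw [hs]
    simp only [Polynomial.mul_comp, Polynomial.add_comp, Polynomial.C_comp, IH a,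
      Polynomial.eval_mul, Polynomial.eval_add, Polynomial.eval_C]
    have h2 : (2 : Polynomial F) = 0 := CharTwo.two_eq_zero
    simp only [map_mul, map_add]
    linear_combination (Wpoly v j * C ((Wpoly v j).eval a)) * h2

lemma Wpoly_succ {j : ℕ} (hj : j < r) :
    Wpoly v (j + 1) = Wpoly v j * (Wpoly v j + C ((Wpoly v j).eval (omegaF v (2 ^ j)))) :=
  Wpoly_succ_aux v hj (Wpoly_comp v j (le_of_lt hj))

lemma eval_Wpoly_pow {j : ℕ} (hj : j < r) :
    (Wpoly v j).eval (omegaF v (2 ^ j)) = ∏ i ∈ Finset.Ico (2 ^ j) (2 ^ (j + 1)), omegaF v i := by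
  rw [Wpoly_eq, Polynomial.eval_prod]
  simp only [Polynomial.eval_add, Polynomial.eval_X, Polynomial.eval_C]
  rw [Finset.prod_Ico_eq_prod_range]
  have h2 : 2 ^ (j + 1) - 2 ^ j = 2 ^ j := by rw [pow_succ]; omega
  rw [h2]
  refine Finset.prod_congr rfl fun i hi => ?_
  rw [Finset.mem_range] at hi
  rw [Nat.add_comm (2 ^ j) i, omegaF_add_pow v hj hi, omegaF_pow v hj, add_comm]

lemma Wpoly_derivative : ∀ j, j ≤ r →
    Polynomial.derivative (Wpoly v j) = C (∏ i ∈ Finset.Ico 1 (2 ^ j), omegaF v i)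
  | 0, _ => by simp [Wpoly_zero]
  | (j+1), hj => by
    have IH := Wpoly_derivative j (by omega)
    rw [Wpoly_succ v (by omega : j < r), Polynomial.derivative_mul, Polynomial.derivative_add,
      Polynomial.derivative_C, add_zero, IH]
    have h2 : (2 : Polynomial F) = 0 := CharTwo.two_eq_zero
    have key : ∀ W : Polynomial F, ∀ c p : F,
        C p * (W + C c) + W * C p = C (c * p) + (W * C p) * 2 := by
      intro W c p
      rw [map_mul]
      ring
    rw [key, h2, mul_zero, add_zero]
    congr 1
    rw [eval_Wpoly_pow v (by omega), mul_comm,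
      Finset.prod_Ico_consecutive _ Nat.one_le_two_pow
        (Nat.pow_le_pow_right (by norm_num) (by omega))]
end W2
section X3
open Polynomial Finset
variable {F : Type*} [Field F] [CharP F 2] {r : ℕ} (v : Fin r → F)

lemma Xpoly_sub_pow {i j : ℕ} (hj : j < r) (hb : Nat.testBit i j = true) :
    Xpoly v (i - 2 ^ j) = ∏ k ∈ (Finset.range r).erase j,
      (if Nat.testBit i k then C (((Wpoly v k).eval (omegaF v (2 ^ k)))⁻¹) * Wpoly v k
        else 1) := by
  unfold Xpoly
  rw [← Finset.mul_prod_erase _ _ (Finset.mem_range.mpr hj)]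
  have hbj : Nat.testBit (i - 2 ^ j) j = false := testBit_sub_pow_self hb
  simp only [hbj, Bool.false_eq_true, if_false, one_mul]
  refine Finset.prod_congr rfl fun k hk => ?_
  have hk' : k ≠ j := Finset.ne_of_mem_erase hk
  have hbit : Nat.testBit (i - 2 ^ j) k = Nat.testBit i k := by
    conv_rhs => rw [← sub_pow_add hb]
    exact (testBit_add_pow_ne hbj hk').symm
  rw [hbit]

lemma Xpoly_derivative (i : ℕ) :
    Polynomial.derivative (Xpoly v i) = ∑ j ∈ Finset.range r,
      if Nat.testBit i j then C (Wd v j) * Xpoly v (i - 2 ^ j) else 0 := by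
  unfold Xpoly
  rw [derivative_finset_prod]
  refine Finset.sum_congr rfl fun j hj => ?_
  rw [Finset.mem_range] at hj
  by_cases hb : Nat.testBit i j
  · simp only [hb, if_true]
    rw [Polynomial.derivative_C_mul, Wpoly_derivative v j (le_of_lt hj)]
    have hWd : ((Wpoly v j).eval (omegaF v (2 ^ j)))⁻¹ * (∏ k ∈ Finset.Ico 1 (2 ^ j), omegaF v k)
        = Wd v j := by
      rw [Wd, div_eq_mul_inv, mul_comm]
    rw [← Xpoly_sub_pow v hj hb, ← Polynomial.C_mul, hWd, mul_comm]
    unfold Xpoly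
    rfl
  · simp only [hb, Bool.false_eq_true, if_false]
    simp
end X3

/-- With `h = 2^t` and `d_0, …, d_{h-1} ∈ F`, the formal derivative of
`Σ_{i<h} d_i · X_i` equals `Σ_{j<h} (Σ_{l ∈ I_j^c} W'_l · d_{j+2^l}) · X_j`, where
`I_j^c` is the set of `0 ≤ l ≤ t-1` with bit `l` of `j` equal to `0`. -/
theorem statement13 (r : ℕ) (hr : 1 ≤ r) (F : Type*) [Field F] [Fintype F] [CharP F 2]
    (hcard : Fintype.card F = 2 ^ r) (v : Fin r → F)
    (hv : LinearIndependent (ZMod 2) v) (t : ℕ) (ht1 : 1 ≤ t) (htr : t ≤ r) (d : ℕ → F) :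
    Polynomial.derivative (∑ i ∈ Finset.range (2 ^ t), Polynomial.C (d i) * Xpoly v i)
      = ∑ j ∈ Finset.range (2 ^ t),
          Polynomial.C
              (∑ l ∈ Finset.range t, if Nat.testBit j l then 0 else Wd v l * d (j + 2 ^ l))
            * Xpoly v j := by
  classical
  have hL : Polynomial.derivative (∑ i ∈ Finset.range (2 ^ t), Polynomial.C (d i) * Xpoly v i)
      = ∑ i ∈ Finset.range (2 ^ t), ∑ j ∈ Finset.range t,
          (if Nat.testBit i j = true
            then Polynomial.C (Wd v j * d i) * Xpoly v (i - 2 ^ j) else 0) := by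
    rw [Polynomial.derivative_sum]
    refine Finset.sum_congr rfl fun i hi => ?_
    rw [Finset.mem_range] at hi
    rw [Polynomial.derivative_C_mul, Xpoly_derivative, Finset.mul_sum]
    rw [← Finset.sum_subset (Finset.range_subset_range.mpr htr)]
    · refine Finset.sum_congr rfl fun j _ => ?_
      by_cases hb : Nat.testBit i j
      · simp only [hb, if_true, map_mul]
        ring
      · simp [hb]
    · intro j _ hjt
      have ht' : t ≤ j := by
        rw [Finset.mem_range] at hjt
        omega
      have hb : Nat.testBit i j = false :=
        Nat.testBit_lt_two_pow
          (lt_of_lt_of_le hi (Nat.pow_le_pow_right (by norm_num) ht'))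
      simp [hb]
  have hR : ∀ i ∈ Finset.range (2 ^ t),
      Polynomial.C
          (∑ l ∈ Finset.range t, if Nat.testBit i l then 0 else Wd v l * d (i + 2 ^ l))
        * Xpoly v i
      = ∑ l ∈ Finset.range t,
          (if Nat.testBit i l = false
            then Polynomial.C (Wd v l * d (i + 2 ^ l)) * Xpoly v i else 0) := by
    intro i _
    rw [map_sum, Finset.sum_mul]
    refine Finset.sum_congr rfl fun l _ => ?_
    by_cases hb : Nat.testBit i l <;> simp [hb]
  rw [hL, Finset.sum_congr rfl hR]
  rw [← Finset.sum_product', ← Finset.sum_product']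
  rw [← Finset.sum_filter, ← Finset.sum_filter]
  refine Finset.sum_bij' (fun p _ => (p.1 - 2 ^ p.2, p.2)) (fun q _ => (q.1 + 2 ^ q.2, q.2))
    ?_ ?_ ?_ ?_ ?_
  · intro p hp
    rw [Finset.mem_filter, Finset.mem_product, Finset.mem_range, Finset.mem_range] at hp ⊢
    obtain ⟨⟨h1, h2⟩, h3⟩ := hp
    exact ⟨⟨lt_of_le_of_lt (Nat.sub_le _ _) h1, h2⟩, testBit_sub_pow_self h3⟩
  · intro q hq
    rw [Finset.mem_filter, Finset.mem_product, Finset.mem_range, Finset.mem_range] at hq ⊢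
    obtain ⟨⟨h1, h2⟩, h3⟩ := hq
    exact ⟨⟨add_pow_lt h3 h1 h2, h2⟩, testBit_add_pow_eq h3⟩
  · intro p hp
    rw [Finset.mem_filter] at hp
    exact Prod.ext (sub_pow_add hp.2) rfl
  · intro q hq
    simp
  · intro p hp
    rw [Finset.mem_filter] at hp
    rw [sub_pow_add hp.2]
end

section
/- For every 1 ≤ h ≤ 2^r, the family (X_0, X_1, …, X_{h−1}) is a basis of the F-vector space of polynomials in F[X] of degree less than h; equivalently, every f ∈ F[X] with deg f < h can be written in exactly one way as f = Σ_{i=0}^{h−1} d_i·X_i with d_0, …, d_{h−1} ∈ F. -/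
open Polynomial Finset

attribute [local instance] ZMod.algebra

/-!
`ω` is injective on `[0, 2^r)` because its values are the `𝔽₂`-combinations of the basis `v`
with the binary digits as coefficients; hence `W_j(ω_{2^j}) ≠ 0`. Each factor of `X_i` then has
degree `2^j` or `0` according to the `j`-th digit of `i`, so `deg X_i = i` for `i < 2^r`, and any
family of polynomials whose `i`-th member has degree exactly `i` is a basis of the polynomials of
degree `< h`.
-/

theorem Nat.sum_range_ite_testBit_two_pow {r i : ℕ} (hi : i < 2 ^ r) :
    ∑ j ∈ range r, (if i.testBit j then 2 ^ j else 0) = i := by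
  rw [← Finset.sum_filter]
  convert Finset.sum_toFinset_bitIndices_two_pow i using 2
  ext j
  simp only [mem_filter, mem_range, List.mem_toFinset, Nat.mem_bitIndices, and_iff_right_iff_imp]
  intro hj
  by_contra! hrj
  rw [Nat.testBit_eq_false_of_lt (hi.trans_le (Nat.pow_le_pow_right two_pos hrj))] at hj
  exact Bool.false_ne_true hj

namespace Polynomial

theorem existsUnique_sum_C_mul_of_degree_eq {K : Type*} [Field K] {h : ℕ} {p : ℕ → K[X]}
    (hp : ∀ i < h, (p i).degree = i) {f : K[X]} (hf : f.degree < h) :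
    ∃! d : Fin h → K, f = ∑ i : Fin h, C (d i) * p i := by
  -- a `Sequence` needs a member of degree `i` for every `i`, so pad with `X ^ i`
  let S : Sequence K := ⟨fun i ↦ if i < h then p i else X ^ i, fun i ↦ by
    split_ifs with hi
    exacts [hp i hi, degree_X_pow i]⟩
  have hS : ∀ i : Fin h, S i = p i := fun i ↦ if_pos i.isLt
  simp_rw [← smul_eq_C_mul, ← hS]
  have hrange : Set.range (fun i : Fin h ↦ S i) = S '' Set.Iio h := by
    rw [← Fin.range_val, ← Set.range_comp]
    rfl
  have hspan : f ∈ Submodule.span K (Set.range fun i : Fin h ↦ S i) := by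
    rw [hrange, S.span_degreeLT fun i _ ↦ (leadingCoeff_ne_zero.2 (S.ne_zero i)).isUnit]
    exact mem_degreeLT.2 hf
  obtain ⟨d, hd⟩ := (Submodule.mem_span_range_iff_exists_fun K).1 hspan
  have hindep : LinearIndependent K fun i : Fin h ↦ S i :=
    S.linearIndependent.comp _ Fin.val_injective
  refine ⟨d, hd.symm, fun d' hd' ↦ _root_.funext ?_⟩
  exact Fintype.linearIndependent_iffₛ.1 hindep d' d (hd'.symm.trans hd.symm)

end Polynomial

section

variable {F : Type*} [Field F] {r : ℕ}

theorem degree_Wpoly (v : Fin r → F) (j : ℕ) : (Wpoly v j).degree = (2 ^ j : ℕ) := by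
  simp [Wpoly, degree_prod]

variable [CharP F 2]

theorem omegaF_eq_sum_smul (v : Fin r → F) (i : ℕ) :
    omegaF v i = ∑ j : Fin r, (if i.testBit j then 1 else 0 : ZMod 2) • v j := by
  simp [omegaF, ite_smul]

variable {v : Fin r → F}

theorem omegaF_injOn (hv : LinearIndependent (ZMod 2) v) :
    Set.InjOn (omegaF v) (Set.Iio (2 ^ r)) := by
  intro i hi k hk hik
  have hdigits := Fintype.linearIndependent_iffₛ.1 hv _ _
    (by simpa only [omegaF_eq_sum_smul] using hik)
  refine Nat.eq_of_testBit_eq fun j ↦ ?_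
  by_cases hj : j < r
  · have hdigit := hdigits ⟨j, hj⟩
    revert hdigit
    cases i.testBit j <;> cases k.testBit j <;> simp
  · have hle : 2 ^ r ≤ 2 ^ j := Nat.pow_le_pow_right two_pos (not_lt.1 hj)
    rw [Nat.testBit_eq_false_of_lt (lt_of_lt_of_le hi hle),
      Nat.testBit_eq_false_of_lt (lt_of_lt_of_le hk hle)]

theorem eval_Wpoly_ne_zero (hv : LinearIndependent (ZMod 2) v) {j : ℕ} (hj : j < r) :
    (Wpoly v j).eval (omegaF v (2 ^ j)) ≠ 0 := by
  have h2j : 2 ^ j < 2 ^ r := Nat.pow_lt_pow_right one_lt_two hj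
  rw [Wpoly, eval_prod, prod_ne_zero_iff]
  intro i hi
  rw [eval_sub, eval_X, eval_C, sub_ne_zero]
  exact fun heq ↦ (mem_range.1 hi).ne' (omegaF_injOn hv h2j ((mem_range.1 hi).trans h2j) heq)

theorem degree_Xpoly (hv : LinearIndependent (ZMod 2) v) {i : ℕ} (hi : i < 2 ^ r) :
    (Xpoly v i).degree = i := by
  have hfactor : ∀ j ∈ range r,
      (if i.testBit j then C ((Wpoly v j).eval (omegaF v (2 ^ j)))⁻¹ * Wpoly v j else 1).degree
        = ((if i.testBit j then 2 ^ j else 0 : ℕ) : WithBot ℕ) := by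
    intro j hj
    split_ifs
    · rw [degree_C_mul (inv_ne_zero (eval_Wpoly_ne_zero hv (mem_range.1 hj))), degree_Wpoly]
    · simp
  rw [Xpoly, degree_prod, sum_congr rfl hfactor, ← Nat.cast_sum,
    Nat.sum_range_ite_testBit_two_pow hi]

end

theorem statement15_general (r : ℕ) (F : Type*) [Field F] [CharP F 2] (v : Fin r → F)
    (hv : LinearIndependent (ZMod 2) v) (h : ℕ) (hh : h ≤ 2 ^ r) :
    ∀ f : Polynomial F, f.degree < (h : WithBot ℕ) →
      ∃! d : Fin h → F, f = ∑ i : Fin h, Polynomial.C (d i) * Xpoly v (i : ℕ) :=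
  fun _ hf ↦
    existsUnique_sum_C_mul_of_degree_eq (fun _ hi ↦ degree_Xpoly hv (hi.trans_le hh)) hf

/-- For every `1 ≤ h ≤ 2^r`, every `f ∈ F[X]` with `deg f < h` can be written
in exactly one way as `f = Σ_{i<h} d_i · X_i`; i.e. `(X_0, …, X_{h-1})` is a basis of the
space of polynomials of degree less than `h`. -/
theorem statement15 (r : ℕ) (hr : 1 ≤ r) (F : Type*) [Field F] [Fintype F] [CharP F 2]
    (hcard : Fintype.card F = 2 ^ r) (v : Fin r → F)
    (hv : LinearIndependent (ZMod 2) v) (h : ℕ) (hh1 : 1 ≤ h) (hh : h ≤ 2 ^ r) :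
    ∀ f : Polynomial F, f.degree < (h : WithBot ℕ) →
      ∃! d : Fin h → F, f = ∑ i : Fin h, Polynomial.C (d i) * Xpoly v (i : ℕ) :=
  statement15_general r F v hv h hh
end
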